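/- arXiv:2401.16410 — 2 statements merged into one kernel-verified Lean document; each statement's English description precedes it below -/
import Mathlib

section
/- Let T be a compact operator with singular system (λ_i, φ_i, ψ_i) where T φ_i = λ_i ψ_i (with {φ_i} orthonormal basis of (ker T)^⊥). If ρ belongs to the β-regularity space Φ_β with 0 < β ≤ 2, i.e., C² := Σ_i ⟨ρ,φ_i⟩²/λ_i^{2β} < ∞, then ‖α(αI + T*T)^{-1} ρ‖² ≤ c · α^β for some constant c depending only on C and β, for all α in (0,1]. In particular the Tikhonov approximation error ‖(αI+T*T)^{-1}T*T ρ − ρ‖² = O(α^{min(β,2)}). -/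
/-!
Each spectral coefficient is damped by the Tikhonov filter `α / (α + λ²)`. Weighted AM–GM with
weights `1 - β/2` and `β/2` gives `α λ^β ≤ α^(β/2) (α + λ²)`, so the squared filter is at most
`α^β / λ^(2β)`; summing against `cᵢ²` bounds the series by `α^β` times the `Φ_β`-norm `C²`.
-/

namespace Real

lemma rpow_one_sub_mul_rpow_le_add {a b θ : ℝ} (ha : 0 ≤ a) (hb : 0 ≤ b) (hθ₀ : 0 ≤ θ)
    (hθ₁ : θ ≤ 1) : a ^ (1 - θ) * b ^ θ ≤ a + b :=
  calc a ^ (1 - θ) * b ^ θ ≤ (1 - θ) * a + θ * b :=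
        geom_mean_le_arith_mean2_weighted (by linarith) hθ₀ ha hb (by ring)
    _ ≤ a + b := by nlinarith

lemma mul_rpow_le_rpow_half_mul_add_sq {α l β : ℝ} (hα : 0 ≤ α) (hl : 0 ≤ l) (hβ₀ : 0 ≤ β)
    (hβ₂ : β ≤ 2) : α * l ^ β ≤ α ^ (β / 2) * (α + l ^ 2) := by
  have hα_split : α = α ^ (β / 2) * α ^ (1 - β / 2) := by
    rw [← rpow_add' hα (by ring_nf; norm_num)]
    ring_nf
    exact (rpow_one α).symm
  have hl_sq : l ^ β = (l ^ 2) ^ (β / 2) := by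
    rw [← rpow_natCast, ← rpow_mul hl]
    ring_nf
  calc α * l ^ β = α ^ (β / 2) * (α ^ (1 - β / 2) * (l ^ 2) ^ (β / 2)) := by
        rw [← hl_sq, ← mul_assoc, ← hα_split]
    _ ≤ α ^ (β / 2) * (α + l ^ 2) := by
        gcongr
        exact rpow_one_sub_mul_rpow_le_add hα (by positivity) (by linarith) (by linarith)

end Real

open Real

lemma tikhonov_filter_sq_le {α l β : ℝ} (hα : 0 ≤ α) (hl : 0 < l) (hβ₀ : 0 ≤ β) (hβ₂ : β ≤ 2) :
    (α / (α + l ^ 2)) ^ 2 ≤ α ^ β / l ^ (2 * β) := by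
  have hfilter : α / (α + l ^ 2) ≤ α ^ (β / 2) / l ^ β := by
    rw [div_le_div_iff₀ (by positivity) (by positivity)]
    exact mul_rpow_le_rpow_half_mul_add_sq hα hl.le hβ₀ hβ₂
  calc (α / (α + l ^ 2)) ^ 2 ≤ (α ^ (β / 2) / l ^ β) ^ 2 := by gcongr
    _ = α ^ β / l ^ (2 * β) := by
        rw [div_pow, ← rpow_mul_natCast hα, ← rpow_mul_natCast hl.le, mul_comm 2 β]
        norm_num

/-- Spectral form of the Tikhonov approximation error bound.  If
`ρ ∈ Φ_β` with `0 < β ≤ 2`, i.e. `C² = Σᵢ cᵢ²/λᵢ^(2β) < ∞` where `cᵢ = ⟨ρ, φᵢ⟩`, then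
`‖α(αI + T*T)⁻¹ρ‖² = Σᵢ (α/(α+λᵢ²))² cᵢ² ≤ C² · α^β` for all `α ∈ (0,1]`,
i.e. the Tikhonov approximation error is `O(α^{min(β,2)})`. -/
theorem tikhonov_approximation_error_rate
    (lam c : ℕ → ℝ) (β C : ℝ)
    (hlam : ∀ i, 0 < lam i)
    (hβ₀ : 0 < β) (hβ₂ : β ≤ 2)
    (hsum : Summable (fun i => c i ^ 2 / (lam i) ^ (2 * β)))
    (hC : ∑' i, c i ^ 2 / (lam i) ^ (2 * β) = C ^ 2) :
    ∀ α : ℝ, 0 < α → α ≤ 1 →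
      ∑' i, (α / (α + (lam i) ^ 2)) ^ 2 * c i ^ 2 ≤ C ^ 2 * α ^ β := by
  intro α hα _
  have hterm : ∀ i, (α / (α + (lam i) ^ 2)) ^ 2 * c i ^ 2 ≤
      α ^ β * (c i ^ 2 / (lam i) ^ (2 * β)) := fun i =>
    calc (α / (α + (lam i) ^ 2)) ^ 2 * c i ^ 2
        ≤ α ^ β / (lam i) ^ (2 * β) * c i ^ 2 := by
          gcongr
          exact tikhonov_filter_sq_le hα.le (hlam i) hβ₀.le hβ₂
      _ = α ^ β * (c i ^ 2 / (lam i) ^ (2 * β)) := by ring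
  have hbound : Summable (fun i => α ^ β * (c i ^ 2 / (lam i) ^ (2 * β))) := hsum.mul_left _
  calc ∑' i, (α / (α + (lam i) ^ 2)) ^ 2 * c i ^ 2
      ≤ ∑' i, α ^ β * (c i ^ 2 / (lam i) ^ (2 * β)) :=
        (hbound.of_nonneg_of_le (fun i => by positivity) hterm).tsum_le_tsum hterm hbound
    _ = C ^ 2 * α ^ β := by rw [tsum_mul_left, hC, mul_comm]
end

section
/- Let w : [0,1] → ℝ be k-times continuously differentiable and K_h a generalized kernel of order γ = min(k, ℓ), meaning ∫ K_h(hu, v+hu) du = 1, ∫ u^j K_h(hu, v+hu) du = 0 for 1 ≤ j ≤ γ−1, and ∫ |u|^γ |K_h(hu, v+hu)| du ≤ C uniformly in v and h. Then sup_{v∈[0,1]} | w(v) − ∫_{[−v/h, (1−v)/h]} K_h(hu, v+hu) w(v+hu) du | ≤ C' h^γ for a constant C' depending on sup |w^{(γ)}| and C. -/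
/-!
Substitute `x = v + h u`. Taylor's theorem around `v` writes `w (v + h u)` as a polynomial of
degree `γ - 1` in `u` plus a remainder bounded by `sup |w^{(γ)}| · h^γ |u|^γ`. Integrated against
the kernel, the polynomial contributes only its constant term `w v` (unit mass and vanishing
moments), so the bias is the kernel integral of the remainder, bounded by
`sup |w^{(γ)}| · h^γ · ∫ |u|^γ |K_h|`.
-/

open MeasureTheory

open Finset Nat in
theorem abs_sub_sum_iteratedDeriv_le {f : ℝ → ℝ} {n : ℕ} (hf : ContDiff ℝ (n + 1) f) {D : ℝ}
    (hD : ∀ t, |iteratedDeriv (n + 1) f t| ≤ D) (a x : ℝ) :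
    |f x - ∑ j ∈ range (n + 1), iteratedDeriv j f a * (x - a) ^ j / j !|
      ≤ D * |x - a| ^ (n + 1) / (n + 1)! := by
  rcases eq_or_ne a x with rfl | hax
  · simp [sum_range_succ']
  obtain ⟨y, -, hy⟩ := taylor_mean_remainder_lagrange_iteratedDeriv hax hf.contDiffOn
  have htaylor : taylorWithinEval f n (Set.uIcc a x) a x
      = ∑ j ∈ range (n + 1), iteratedDeriv j f a * (x - a) ^ j / j ! := by
    rw [taylor_within_apply]
    refine sum_congr rfl fun j hj => ?_
    rw [iteratedDerivWithin_eq_iteratedDeriv (uniqueDiffOn_uIcc hax) _ Set.left_mem_uIcc,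
      smul_eq_mul]
    · ring
    · exact hf.contDiffAt.of_le (by exact_mod_cast (mem_range.1 hj).le)
  rw [← htaylor, hy, abs_div, abs_mul, abs_pow, Nat.abs_cast]
  gcongr
  exact hD y

open Finset in
theorem integral_mul_sum_monomial_of_moments {μ : Measure ℝ} {g : ℝ → ℝ} {n : ℕ} (c : ℕ → ℝ)
    (hmass : ∫ u, g u ∂μ = 1) (hmom : ∀ j, 1 ≤ j → j ≤ n → ∫ u, u ^ j * g u ∂μ = 0)
    (hint : ∀ j ≤ n, Integrable (fun u => u ^ j * g u) μ) :
    ∫ u, g u * ∑ j ∈ range (n + 1), c j * u ^ j ∂μ = c 0 := by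
  have hterm : ∀ j ∈ range (n + 1), Integrable (fun u => c j * (u ^ j * g u)) μ :=
    fun j hj => (hint j (Nat.lt_succ_iff.1 (mem_range.1 hj))).const_mul _
  calc ∫ u, g u * ∑ j ∈ range (n + 1), c j * u ^ j ∂μ
      = ∫ u, ∑ j ∈ range (n + 1), c j * (u ^ j * g u) ∂μ := by
        congr! 2 with u
        rw [mul_sum]
        exact sum_congr rfl fun j _ => by ring
    _ = ∑ j ∈ range (n + 1), c j * ∫ u, u ^ j * g u ∂μ := by
        rw [integral_finsetSum _ hterm]
        simp_rw [integral_const_mul]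
    _ = c 0 := by
        rw [sum_eq_single_of_mem 0 (by simp)]
        · simp [hmass]
        intro j hj hj0
        rw [hmom j (Nat.one_le_iff_ne_zero.2 hj0) (Nat.lt_succ_iff.1 (mem_range.1 hj)), mul_zero]

open Finset in
theorem abs_sub_integral_mul_le_of_moments {μ : Measure ℝ} {g F : ℝ → ℝ} {n : ℕ} (c : ℕ → ℝ)
    {M : ℝ} (hmass : ∫ u, g u ∂μ = 1) (hmom : ∀ j, 1 ≤ j → j ≤ n → ∫ u, u ^ j * g u ∂μ = 0)
    (hint : ∀ j ≤ n + 1, Integrable (fun u => u ^ j * g u) μ)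
    (hgF : Integrable (fun u => g u * F u) μ)
    (hF : ∀ᵐ u ∂μ, |F u - ∑ j ∈ range (n + 1), c j * u ^ j| ≤ M * |u| ^ (n + 1)) :
    |c 0 - ∫ u, g u * F u ∂μ| ≤ M * ∫ u, |u| ^ (n + 1) * |g u| ∂μ := by
  set P : ℝ → ℝ := fun u => ∑ j ∈ range (n + 1), c j * u ^ j
  have hgP : Integrable (fun u => g u * P u) μ := by
    simp only [P, mul_sum]
    refine integrable_finsetSum _ fun j hj => ?_
    simpa only [mul_comm, mul_left_comm] using
      (hint j (mem_range.1 hj).le).const_mul (c j)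
  have habs : Integrable (fun u => |u| ^ (n + 1) * |g u|) μ := by
    simpa only [abs_mul, abs_pow] using (hint (n + 1) le_rfl).abs
  calc |c 0 - ∫ u, g u * F u ∂μ|
      = |∫ u, g u * (P u - F u) ∂μ| := by
        simp_rw [mul_sub]
        rw [integral_sub hgP hgF, integral_mul_sum_monomial_of_moments c hmass hmom
          fun j hj => hint j (hj.trans n.le_succ)]
    _ ≤ ∫ u, M * (|u| ^ (n + 1) * |g u|) ∂μ := by
        rw [← Real.norm_eq_abs]
        refine norm_integral_le_of_norm_le (habs.const_mul M) ?_
        filter_upwards [hF] with u hu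
        rw [Real.norm_eq_abs, abs_mul, abs_sub_comm]
        calc |g u| * |F u - P u| ≤ |g u| * (M * |u| ^ (n + 1)) := by gcongr
          _ = M * (|u| ^ (n + 1) * |g u|) := by ring
    _ = M * ∫ u, |u| ^ (n + 1) * |g u| ∂μ := integral_const_mul M fun u => |u| ^ (n + 1) * |g u|

theorem kernel_smoothing_bias_bound_general
    (k l : ℕ) (γ : ℕ) (hγdef : γ = min k l) (hγ : 1 ≤ γ)
    (w : ℝ → ℝ) (hw : ContDiff ℝ (k : ℕ∞) w)
    (D : ℝ) (hD : ∀ t : ℝ, |iteratedDeriv γ w t| ≤ D)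
    (h : ℝ) (hh : 0 < h)
    (K : ℝ → ℝ → ℝ) (C : ℝ)
    -- unit mass
    (hK0 : ∀ v ∈ Set.Icc (0:ℝ) 1,
      ∫ u in Set.Icc (-(v / h)) ((1 - v) / h), K (h * u) (v + h * u) = 1)
    -- vanishing moments of order 1,…,γ−1
    (hKj : ∀ v ∈ Set.Icc (0:ℝ) 1, ∀ j : ℕ, 1 ≤ j → j ≤ γ - 1 →
      ∫ u in Set.Icc (-(v / h)) ((1 - v) / h), u ^ j * K (h * u) (v + h * u) = 0)
    -- bounded γ-th absolute moment
    (hKγ : ∀ v ∈ Set.Icc (0:ℝ) 1,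
      ∫ u in Set.Icc (-(v / h)) ((1 - v) / h), |u| ^ γ * |K (h * u) (v + h * u)| ≤ C)
    -- integrability of the smoothed function and moments
    (hint : ∀ v ∈ Set.Icc (0:ℝ) 1, ∀ j : ℕ, j ≤ γ →
      IntegrableOn (fun u => u ^ j * K (h * u) (v + h * u) * w (v + h * u))
        (Set.Icc (-(v / h)) ((1 - v) / h))) :
    ∀ v ∈ Set.Icc (0:ℝ) 1,
      |w v - ∫ u in Set.Icc (-(v / h)) ((1 - v) / h), K (h * u) (v + h * u) * w (v + h * u)|
        ≤ C * D * h ^ γ := by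
  obtain ⟨n, rfl⟩ : ∃ n, γ = n + 1 := ⟨γ - 1, (Nat.succ_pred_eq_of_pos hγ).symm⟩
  have hwn : ContDiff ℝ (n + 1) w := hw.of_le (by exact_mod_cast hγdef ▸ min_le_left k l)
  have hM : 0 ≤ D * h ^ (n + 1) := mul_nonneg ((abs_nonneg _).trans (hD 0)) (pow_nonneg hh.le _)
  intro v hv
  have hKint : IntegrableOn (fun u => K (h * u) (v + h * u)) (Set.Icc (-(v / h)) ((1 - v) / h)) :=
    -- a non-integrable function would have integral `0`, not `1`
    .of_integral_ne_zero (by simp [hK0 v hv])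
  have hremainder : ∀ u, |w (v + h * u) - ∑ j ∈ Finset.range (n + 1),
      iteratedDeriv j w v * h ^ j / j.factorial * u ^ j| ≤ D * h ^ (n + 1) * |u| ^ (n + 1) := by
    intro u
    have htaylor := abs_sub_sum_iteratedDeriv_le hwn hD v (v + h * u)
    rw [add_sub_cancel_left, abs_mul, abs_of_pos hh, mul_pow, ← mul_assoc] at htaylor
    calc _ = |w (v + h * u) - ∑ j ∈ Finset.range (n + 1),
          iteratedDeriv j w v * (h * u) ^ j / j.factorial| := by
          simp_rw [mul_pow, mul_div_right_comm, mul_assoc]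
      _ ≤ D * h ^ (n + 1) * |u| ^ (n + 1) / (n + 1).factorial := htaylor
      _ ≤ _ := div_le_self (mul_nonneg hM (by positivity)) (Nat.one_le_cast.2 (n + 1).factorial_pos)
  have hbias := abs_sub_integral_mul_le_of_moments (n := n)
    (fun j => iteratedDeriv j w v * h ^ j / j.factorial) (hK0 v hv)
    (by simpa only [Nat.add_sub_cancel] using hKj v hv)
    (fun j _ => hKint.continuousOn_mul (continuous_pow j).continuousOn isCompact_Icc)
    (by simpa only [pow_zero, one_mul, IntegrableOn] using hint v hv 0 n.succ.zero_le)
    (ae_of_all _ hremainder)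
  simp only [pow_zero, mul_one, Nat.factorial_zero, Nat.cast_one, div_one] at hbias
  calc _ ≤ D * h ^ (n + 1) * ∫ u in _, |u| ^ (n + 1) * |K (h * u) (v + h * u)| := hbias
    _ ≤ D * h ^ (n + 1) * C := mul_le_mul_of_nonneg_left (hKγ v hv) hM
    _ = C * D * h ^ (n + 1) := by ring

/-- Kernel smoothing bias bound.  If `w` is `γ`-times continuously
differentiable with `|w^{(γ)}| ≤ D` and `K_h` is a generalized kernel of order
`γ = min(k, ℓ)` (unit mass, vanishing moments of orders `1,…,γ−1`, and `γ`-th absolute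
moment bounded by `C`), then
`sup_{v ∈ [0,1]} |w(v) − ∫_{[−v/h,(1−v)/h]} K_h(hu, v+hu) w(v+hu) du| ≤ C' h^γ`
with `C' = C · D` (depending only on `sup |w^{(γ)}|` and `C`). -/
theorem kernel_smoothing_bias_bound
    (k l : ℕ) (γ : ℕ) (hγdef : γ = min k l) (hγ : 1 ≤ γ)
    (w : ℝ → ℝ) (hw : ContDiff ℝ (k : ℕ∞) w)
    (D : ℝ) (hD : ∀ t : ℝ, |iteratedDeriv γ w t| ≤ D)
    (h : ℝ) (hh : 0 < h)
    (K : ℝ → ℝ → ℝ) (C : ℝ) (hC : 0 < C)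
    -- unit mass
    (hK0 : ∀ v ∈ Set.Icc (0:ℝ) 1,
      ∫ u in Set.Icc (-(v / h)) ((1 - v) / h), K (h * u) (v + h * u) = 1)
    -- vanishing moments of order 1,…,γ−1
    (hKj : ∀ v ∈ Set.Icc (0:ℝ) 1, ∀ j : ℕ, 1 ≤ j → j ≤ γ - 1 →
      ∫ u in Set.Icc (-(v / h)) ((1 - v) / h), u ^ j * K (h * u) (v + h * u) = 0)
    -- bounded γ-th absolute moment
    (hKγ : ∀ v ∈ Set.Icc (0:ℝ) 1,
      ∫ u in Set.Icc (-(v / h)) ((1 - v) / h), |u| ^ γ * |K (h * u) (v + h * u)| ≤ C)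
    -- integrability of the smoothed function and moments
    (hint : ∀ v ∈ Set.Icc (0:ℝ) 1, ∀ j : ℕ, j ≤ γ →
      IntegrableOn (fun u => u ^ j * K (h * u) (v + h * u) * w (v + h * u))
        (Set.Icc (-(v / h)) ((1 - v) / h))) :
    ∀ v ∈ Set.Icc (0:ℝ) 1,
      |w v - ∫ u in Set.Icc (-(v / h)) ((1 - v) / h), K (h * u) (v + h * u) * w (v + h * u)|
        ≤ C * D * h ^ γ :=
  kernel_smoothing_bias_bound_general k l γ hγdef hγ w hw D hD h hh K C hK0 hKj hKγ hint
end
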